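/- arXiv:1505.06429 — 2 statements merged into one kernel-verified Lean document; each statement's English description precedes it below -/
import Mathlib

section
/- As n → ∞, the sequence ϑ_n / ∏_{k=2}^n ζ(k) converges to 1/(ζ(6) · ∏_{k=4}^∞ ζ(k)) (≈ 0.85). -/
/-!
With `x = 1/p`, the `p`-factor of `ϑ_n` equals
`(1 - x⁶ - x^(n+1) (1 + x) (1 - x³)) / ((1 - x²) (1 - x³))`, so by the Euler product
`ϑ_n = ζ(2) ζ(3) ∏_p (1 - x⁶ - x^(n+1) (1 + x) (1 - x³))` and the ratio in question is
`∏_p (1 - x⁶ - x^(n+1) (1 + x) (1 - x³)) / ∏_{k=4}^n ζ(k)`. The correction to `1` is `O(x²)`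
uniformly in `n`, so by dominated convergence the numerator tends to `∏_p (1 - p⁻⁶) = 1/ζ(6)`;
the denominator tends to `∏_{k≥4} ζ(k)`, which converges because `ζ(k) - 1 = O(2⁻ᵏ)`.
-/

open Filter

/-- `ϑ_n`: the product over all primes `p` of `1 + (p^(n-1) - 1)/(p^(n+1) - p^n)`. -/
noncomputable def thetaN (n : ℕ) : ℝ :=
  ∏' p : Nat.Primes, (1 + ((p : ℝ) ^ (n - 1) - 1) / ((p : ℝ) ^ (n + 1) - (p : ℝ) ^ n))

/-- The Riemann zeta function at a natural number `k`, as the real series `∑ m ≥ 1, m⁻ᵏ`. -/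
noncomputable def zetaNat (k : ℕ) : ℝ :=
  ∑' m : ℕ, 1 / (m + 1 : ℝ) ^ k

open Topology

lemma Nat.Primes.summable_inv_sq : Summable fun p : Nat.Primes => ((p : ℝ)⁻¹) ^ 2 := by
  refine (Nat.Primes.summable_rpow.mpr (by norm_num : (-2 : ℝ) < -1)).congr fun p => ?_
  rw [Real.rpow_neg (by positivity), inv_pow, Real.rpow_two]

lemma Nat.Primes.inv_le_half (p : Nat.Primes) : (p : ℝ)⁻¹ ≤ 1 / 2 := by
  rw [one_div]
  exact inv_anti₀ two_pos (by exact_mod_cast p.prop.two_le)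

lemma summable_one_div_nat_add_one_pow {k : ℕ} (hk : 2 ≤ k) :
    Summable fun m : ℕ => 1 / (m + 1 : ℝ) ^ k := by
  have := (summable_nat_add_iff 1).mpr (Real.summable_one_div_nat_pow.mpr hk)
  exact_mod_cast this

lemma zetaNat_eq_one_add {k : ℕ} (hk : 2 ≤ k) :
    zetaNat k = 1 + ∑' m : ℕ, 1 / (m + 2 : ℝ) ^ k := by
  rw [zetaNat, (summable_one_div_nat_add_one_pow hk).tsum_eq_zero_add]
  push_cast
  simp only [zero_add, one_pow, div_one]
  congr 1
  exact tsum_congr fun m => by ring_nf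

lemma one_le_zetaNat {k : ℕ} (hk : 2 ≤ k) : 1 ≤ zetaNat k := by
  rw [zetaNat_eq_one_add hk]
  have : 0 ≤ ∑' m : ℕ, 1 / (m + 2 : ℝ) ^ k := tsum_nonneg fun m => by positivity
  linarith

lemma zetaNat_pos {k : ℕ} (hk : 2 ≤ k) : 0 < zetaNat k :=
  zero_lt_one.trans_le (one_le_zetaNat hk)

lemma zetaNat_add_two_sub_one_le (k : ℕ) :
    zetaNat (k + 2) - 1 ≤ (1 / 2) ^ k * zetaNat 2 := by
  have hterm (m : ℕ) : 1 / (m + 2 : ℝ) ^ (k + 2) ≤ (1 / 2) ^ k * (1 / (m + 1 : ℝ) ^ 2) := by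
    rw [div_pow, one_pow, div_mul_div_comm, one_mul, pow_add]
    gcongr <;> linarith
  rw [zetaNat_eq_one_add (by omega), add_sub_cancel_left, zetaNat, ← tsum_mul_left]
  have hsum := (summable_one_div_nat_add_one_pow le_rfl).mul_left ((1 / 2 : ℝ) ^ k)
  exact Summable.tsum_le_tsum hterm (hsum.of_nonneg_of_le (fun m => by positivity) hterm) hsum

lemma multipliable_zetaNat_add {j : ℕ} (hj : 2 ≤ j) : Multipliable fun k => zetaNat (k + j) := by
  obtain ⟨i, rfl⟩ : ∃ i, j = i + 2 := ⟨j - 2, by omega⟩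
  have hle (k : ℕ) : zetaNat (k + (i + 2)) - 1 ≤ (1 / 2) ^ k * zetaNat 2 := by
    rw [← add_assoc]
    refine (zetaNat_add_two_sub_one_le _).trans ?_
    have : (1 / 2 : ℝ) ^ (k + i) ≤ (1 / 2) ^ k :=
      pow_le_pow_of_le_one (by norm_num) (by norm_num) (by omega)
    have := zetaNat_pos le_rfl
    nlinarith
  have hsum : Summable fun k => zetaNat (k + (i + 2)) - 1 :=
    (summable_geometric_two.mul_right _).of_nonneg_of_le
      (fun k => by linarith [one_le_zetaNat (by omega : 2 ≤ k + (i + 2))]) hle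
  simpa using Real.multipliable_one_add_of_summable hsum

lemma hasProd_zetaNat {k : ℕ} (hk : 2 ≤ k) :
    HasProd (fun p : Nat.Primes => (1 - ((p : ℝ)⁻¹) ^ k)⁻¹) (zetaNat k) := by
  let f : ℕ →*₀ ℝ := (powMonoidWithZeroHom (by omega : k ≠ 0)).comp
    (invMonoidWithZeroHom.comp (Nat.castRingHom ℝ).toMonoidWithZeroHom)
  have hf : ∀ n, f n = 1 / (n : ℝ) ^ k := fun n => by
    rw [one_div, ← inv_pow]; rfl
  have hsum : Summable fun n => f n := by simpa [hf] using Real.summable_one_div_nat_pow.mpr hk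
  have hval : ∑' n, f n = zetaNat k := by
    rw [hsum.tsum_eq_zero_add]
    simp [hf, zetaNat, zero_pow (by omega : k ≠ 0)]
  rw [← hval]
  exact EulerProduct.eulerProduct_completely_multiplicative_hasProd hsum.norm

lemma hasProd_one_sub_inv_pow {k : ℕ} (hk : 2 ≤ k) :
    HasProd (fun p : Nat.Primes => 1 - ((p : ℝ)⁻¹) ^ k) (zetaNat k)⁻¹ := by
  simpa using (hasProd_zetaNat hk).inv₀ (zetaNat_pos hk).ne'

noncomputable def thetaDefect (n : ℕ) (x : ℝ) : ℝ :=
  -(x ^ 6 + x ^ (n + 1) * (1 + x) * (1 - x ^ 3))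

lemma one_add_div_eq_thetaDefect {q : ℝ} (hq : 1 < q) {n : ℕ} (hn : 1 ≤ n) :
    1 + (q ^ (n - 1) - 1) / (q ^ (n + 1) - q ^ n)
      = (1 + thetaDefect n q⁻¹) * (1 - q⁻¹ ^ 2)⁻¹ * (1 - q⁻¹ ^ 3)⁻¹ := by
  obtain ⟨m, rfl⟩ : ∃ m, n = m + 1 := ⟨n - 1, by omega⟩
  have hq2 : q ^ 2 - 1 ≠ 0 := by nlinarith
  have hq3 : q ^ 3 - 1 ≠ 0 := by nlinarith [one_lt_pow₀ hq three_ne_zero]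
  have hden : q ^ (m + 1 + 1) - q ^ (m + 1) ≠ 0 := by
    rw [show q ^ (m + 1 + 1) - q ^ (m + 1) = q ^ (m + 1) * (q - 1) by ring]
    exact mul_ne_zero (by positivity) (by linarith)
  simp only [Nat.add_sub_cancel, thetaDefect, inv_pow]
  field_simp
  ring

lemma abs_thetaDefect_le {x : ℝ} (h0 : 0 ≤ x) (h1 : x ≤ 1 / 2) {n : ℕ} (hn : 1 ≤ n) :
    |thetaDefect n x| ≤ 2 * x ^ 2 := by
  have hpow : x ^ (n + 1) ≤ x ^ 2 := pow_le_pow_of_le_one h0 (by linarith) (by omega)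
  have hx6 : x ^ 6 ≤ x ^ 2 / 16 := by
    have : x ^ 4 ≤ (1 / 2) ^ 4 := by gcongr
    nlinarith [sq_nonneg x]
  have hx3 : 0 ≤ 1 - x ^ 3 := by nlinarith [pow_le_one₀ h0 (by linarith : x ≤ 1) (n := 3)]
  have htail : 0 ≤ x ^ (n + 1) * (1 + x) * (1 - x ^ 3) := mul_nonneg (by positivity) hx3
  have htail' : x ^ (n + 1) * (1 + x) * (1 - x ^ 3) ≤ x ^ 2 * (3 / 2) :=
    calc x ^ (n + 1) * (1 + x) * (1 - x ^ 3) ≤ x ^ (n + 1) * (1 + x) :=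
          mul_le_of_le_one_right (by positivity) (by linarith [pow_nonneg h0 3])
      _ ≤ x ^ 2 * (3 / 2) := by gcongr; linarith
  rw [thetaDefect, abs_neg, abs_of_nonneg (by positivity)]
  linarith

lemma tendsto_thetaDefect {x : ℝ} (hx : |x| < 1) :
    Tendsto (fun n => thetaDefect n x) atTop (𝓝 (-x ^ 6)) := by
  have hpow : Tendsto (fun n => x ^ (n + 1)) atTop (𝓝 0) :=
    (tendsto_pow_atTop_nhds_zero_of_abs_lt_one hx).comp (tendsto_add_atTop_nat 1)
  have h := (((hpow.mul_const (1 + x)).mul_const (1 - x ^ 3)).const_add (x ^ 6)).neg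
  simp only [zero_mul, add_zero] at h
  exact h

lemma summable_thetaDefect_inv_prime {n : ℕ} (hn : 1 ≤ n) :
    Summable fun p : Nat.Primes => thetaDefect n (p : ℝ)⁻¹ :=
  (Nat.Primes.summable_inv_sq.mul_left 2).of_norm_bounded fun p =>
    abs_thetaDefect_le (by positivity) p.inv_le_half hn

lemma thetaN_eq {n : ℕ} (hn : 1 ≤ n) :
    thetaN n = (∏' p : Nat.Primes, (1 + thetaDefect n (p : ℝ)⁻¹)) * zetaNat 2 * zetaNat 3 := by
  have h := ((Real.multipliable_one_add_of_summable (summable_thetaDefect_inv_prime hn)).hasProd.mul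
    (hasProd_zetaNat le_rfl)).mul (hasProd_zetaNat (by norm_num : 2 ≤ 3))
  rw [thetaN, ← h.tprod_eq]
  exact tprod_congr fun p => one_add_div_eq_thetaDefect (by exact_mod_cast p.prop.one_lt) hn

lemma tendsto_tprod_one_add_thetaDefect :
    Tendsto (fun n => ∏' p : Nat.Primes, (1 + thetaDefect n (p : ℝ)⁻¹)) atTop
      (𝓝 (zetaNat 6)⁻¹) := by
  have hlim := tendsto_tprod_one_add_of_dominated_convergence
    (Nat.Primes.summable_inv_sq.mul_left 2)
    (fun p : Nat.Primes => tendsto_thetaDefect (x := (p : ℝ)⁻¹)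
      (by rw [abs_of_nonneg (by positivity)]; linarith [p.inv_le_half]))
    (eventually_atTop.mpr ⟨1, fun n hn p => abs_thetaDefect_le (by positivity) p.inv_le_half hn⟩)
  rw [← (hasProd_one_sub_inv_pow (by norm_num : 2 ≤ 6)).tprod_eq]
  simpa only [← sub_eq_add_neg] using hlim

lemma prod_Icc_two_zetaNat {n : ℕ} (hn : 3 ≤ n) :
    ∏ k ∈ Finset.Icc 2 n, zetaNat k
      = zetaNat 2 * zetaNat 3 * ∏ k ∈ Finset.range (n - 3), zetaNat (k + 4) := by
  rw [← Finset.Ico_add_one_right_eq_Icc, Finset.prod_Ico_eq_prod_range,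
    show n + 1 - 2 = n - 3 + 1 + 1 by omega, Finset.prod_range_succ', Finset.prod_range_succ']
  ring_nf

/-- As `n → ∞`, the density `ϑ_n / ∏_{k=2}^n ζ(k)` converges to
`1/(ζ(6) · ∏_{k=4}^∞ ζ(k)) ≈ 0.85`. -/
theorem cocyclic_density_limit :
    Tendsto (fun n : ℕ => thetaN n / ∏ k ∈ Finset.Icc 2 n, zetaNat k) atTop
      (nhds (1 / (zetaNat 6 * ∏' k : ℕ, zetaNat (k + 4)))) := by
  have hprod := (multipliable_zetaNat_add (by norm_num : 2 ≤ 4)).hasProd.tendsto_prod_nat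
  have hpos : ∏' k : ℕ, zetaNat (k + 4) ≠ 0 :=
    (zero_lt_one.trans_le (ge_of_tendsto' hprod fun n =>
      Finset.one_le_prod fun k _ => one_le_zetaNat (by omega))).ne'
  rw [one_div, mul_inv, ← div_eq_mul_inv]
  have hden := hprod.comp (tendsto_sub_atTop_nat 3)
  refine (tendsto_tprod_one_add_thetaDefect.div hden hpos).congr' ?_
  filter_upwards [eventually_ge_atTop 3] with n hn
  have h2 := zetaNat_pos le_rfl
  have h3 := zetaNat_pos (by norm_num : 2 ≤ 3)
  rw [Pi.div_apply, Function.comp_apply, thetaN_eq (by omega), prod_Icc_two_zetaNat hn]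
  field_simp
end

section
/- For every prime p and every integer k ≥ 0, P(p, k) ≤ p^{−k²}/(1 − p^{−1} − p^{−2}) ≤ 4·p^{−k²}. -/
/-!
Write `x = 1/p`, so that `P(p, k) = x^{k²} N / F²` with `N = ∏_{i ≥ 1} (1 - x^i)` and `F` its
`k`-th partial product. All factors lie in `[0, 1]`, hence `N ≤ F` and `N / F² ≤ 1 / N`. Splitting
off the first two factors and applying the Weierstrass inequality `∏ (1 - aᵢ) ≥ 1 - ∑ aᵢ` to the rest
gives `N ≥ (1 - x)(1 - x²)(1 - x³/(1 - x)) = 1 - x - x² + x⁵`, and `1 - x - x² ≥ 1/4` for `x ≤ 1/2`.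
-/

/-- The Cohen–Lenstra probability that a random abelian `p`-group has rank `r`:
`P(p, r) = p^(-r²) · (∏_{i=1}^∞ (1 - p^{-i})) / (∏_{i=1}^r (1 - p^{-i}))²`. -/
noncomputable def CLrank (p r : ℕ) : ℝ :=
  (∏' i : ℕ, (1 - 1 / (p : ℝ) ^ (i + 1))) /
    ((p : ℝ) ^ (r ^ 2) * (∏ i ∈ Finset.range r, (1 - 1 / (p : ℝ) ^ (i + 1))) ^ 2)

open Finset

theorem Finset.one_sub_sum_le_prod_one_sub {ι R : Type*} [CommRing R] [LinearOrder R]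
    [IsStrictOrderedRing R] (s : Finset ι) {a : ι → R} (h0 : ∀ i ∈ s, 0 ≤ a i)
    (h1 : ∀ i ∈ s, a i ≤ 1) : 1 - ∑ i ∈ s, a i ≤ ∏ i ∈ s, (1 - a i) := by
  classical
  induction s using Finset.induction_on with
  | empty => simp
  | insert j s hj ih =>
    simp only [Finset.forall_mem_insert] at h0 h1
    rw [sum_insert hj, prod_insert hj]
    have hS : 0 ≤ a j * ∑ i ∈ s, a i := mul_nonneg h0.1 (sum_nonneg h0.2)
    calc 1 - (a j + ∑ i ∈ s, a i) ≤ (1 - a j) * (1 - ∑ i ∈ s, a i) := by linarith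
      _ ≤ (1 - a j) * ∏ i ∈ s, (1 - a i) :=
        mul_le_mul_of_nonneg_left (ih h0.2 h1.2) (sub_nonneg.2 h1.1)

theorem one_sub_tsum_le_tprod_one_sub {ι : Type*} {a : ι → ℝ} (h0 : ∀ i, 0 ≤ a i)
    (h1 : ∀ i, a i ≤ 1) (ha : Summable a) (hm : Multipliable fun i => 1 - a i) :
    1 - ∑' i, a i ≤ ∏' i, (1 - a i) :=
  le_hasProd_of_le_prod hm.hasProd fun s =>
    (sub_le_sub_left (ha.sum_le_tsum s fun i _ => h0 i) 1).trans
      (s.one_sub_sum_le_prod_one_sub (fun i _ => h0 i) fun i _ => h1 i)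

theorem Multipliable.tprod_le_prod_range {f : ℕ → ℝ} {k : ℕ} (h0 : ∀ i, 0 ≤ f i)
    (h1 : ∀ i, f i ≤ 1) (hf : Multipliable fun i => f (i + k)) :
    ∏' i, f i ≤ ∏ i ∈ range k, f i := by
  have htail : ∏' i, f (i + k) ≤ 1 :=
    hf.tprod_le_of_prod_range_le fun n => prod_le_one (fun i _ => h0 _) fun i _ => h1 _
  rw [← hf.prod_mul_tprod_nat_mul']
  exact mul_le_of_le_one_right (prod_nonneg fun i _ => h0 i) htail

theorem summable_pow_add {x : ℝ} (hx0 : 0 ≤ x) (hx1 : x < 1) (k : ℕ) :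
    Summable fun i : ℕ => x ^ (i + k) :=
  (summable_nat_add_iff k).2 (summable_geometric_of_lt_one hx0 hx1)

theorem multipliable_one_sub_pow_add {x : ℝ} (hx0 : 0 ≤ x) (hx1 : x < 1) (k : ℕ) :
    Multipliable fun i : ℕ => 1 - x ^ (i + k) := by
  simpa only [sub_eq_add_neg] using
    Real.multipliable_one_add_of_summable (summable_pow_add hx0 hx1 k).neg

theorem tprod_one_sub_pow_succ_le_prod_range {x : ℝ} (hx0 : 0 ≤ x) (hx1 : x < 1) (k : ℕ) :
    ∏' i : ℕ, (1 - x ^ (i + 1)) ≤ ∏ i ∈ range k, (1 - x ^ (i + 1)) :=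
  Multipliable.tprod_le_prod_range (fun i => sub_nonneg.2 (pow_le_one₀ hx0 hx1.le))
    (fun i => sub_le_self _ (pow_nonneg hx0 _))
    (by simpa only [add_assoc] using multipliable_one_sub_pow_add hx0 hx1 (k + 1))

theorem one_sub_sub_sq_le_tprod_one_sub_pow_succ {x : ℝ} (hx0 : 0 ≤ x) (hx1 : x < 1) :
    1 - x - x ^ 2 ≤ ∏' i : ℕ, (1 - x ^ (i + 1)) := by
  have htail : 1 - x ^ 3 / (1 - x) ≤ ∏' i : ℕ, (1 - x ^ (i + 3)) := by
    have hsum : ∑' i : ℕ, x ^ (i + 3) = x ^ 3 / (1 - x) := by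
      simp only [pow_add, tsum_mul_right, tsum_geometric_of_lt_one hx0 hx1]
      ring
    rw [← hsum]
    exact one_sub_tsum_le_tprod_one_sub (fun i => pow_nonneg hx0 _)
      (fun i => pow_le_one₀ hx0 hx1.le) (summable_pow_add hx0 hx1 3)
      (multipliable_one_sub_pow_add hx0 hx1 3)
  have hsplit : (1 - x) * (1 - x ^ 2) * ∏' i : ℕ, (1 - x ^ (i + 3)) =
      ∏' i : ℕ, (1 - x ^ (i + 1)) := by
    simpa [prod_range_succ] using (multipliable_one_sub_pow_add hx0 hx1 3).prod_mul_tprod_nat_mul'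
      (f := fun i => 1 - x ^ (i + 1)) (k := 2)
  have hx1_ne : 1 - x ≠ 0 := (sub_pos.2 hx1).ne'
  have hhead : (1 - x) * (1 - x ^ 2) * (1 - x ^ 3 / (1 - x)) = 1 - x - x ^ 2 + x ^ 5 := by
    field_simp
    ring
  rw [← hsplit]
  calc 1 - x - x ^ 2 ≤ 1 - x - x ^ 2 + x ^ 5 := le_add_of_nonneg_right (pow_nonneg hx0 5)
    _ = (1 - x) * (1 - x ^ 2) * (1 - x ^ 3 / (1 - x)) := hhead.symm
    _ ≤ _ := by
        gcongr
        exact mul_nonneg (sub_nonneg.2 hx1.le) (sub_nonneg.2 (pow_le_one₀ hx0 hx1.le))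

theorem div_sq_le_one_div_of_le_of_le {d a b : ℝ} (hd : 0 < d) (hda : d ≤ a) (hab : a ≤ b) :
    a / b ^ 2 ≤ 1 / d := by
  have ha : 0 < a := hd.trans_le hda
  calc a / b ^ 2 ≤ a / a ^ 2 := by gcongr
    _ = 1 / a := by field_simp
    _ ≤ 1 / d := one_div_le_one_div_of_le hd hda

theorem CLrank_eq (p r : ℕ) :
    CLrank p r = (1 / (p : ℝ)) ^ (r ^ 2) * ((∏' i : ℕ, (1 - (1 / (p : ℝ)) ^ (i + 1))) /
      (∏ i ∈ range r, (1 - (1 / (p : ℝ)) ^ (i + 1))) ^ 2) := by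
  simp only [CLrank, one_div_pow]
  ring

theorem CLrank_le (p : ℕ) (hp : p.Prime) (k : ℕ) :
    CLrank p k ≤ (1 / (p : ℝ) ^ (k ^ 2)) / (1 - 1 / (p : ℝ) - 1 / (p : ℝ) ^ 2) ∧
      (1 / (p : ℝ) ^ (k ^ 2)) / (1 - 1 / (p : ℝ) - 1 / (p : ℝ) ^ 2) ≤
        4 / (p : ℝ) ^ (k ^ 2) := by
  rw [CLrank_eq, ← one_div_pow, ← one_div_pow, div_eq_mul_one_div (_ ^ _), div_eq_mul_one_div 4,
    ← one_div_pow, mul_comm 4]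
  set x : ℝ := 1 / p
  have hx0 : 0 ≤ x := by positivity
  have hx : x ≤ 1 / 2 := one_div_le_one_div_of_le two_pos (by exact_mod_cast hp.two_le)
  have hd : 1 / 4 ≤ 1 - x - x ^ 2 := by nlinarith
  have hN := one_sub_sub_sq_le_tprod_one_sub_pow_succ hx0 (by linarith)
  have hNF := tprod_one_sub_pow_succ_le_prod_range hx0 (by linarith) k
  refine ⟨mul_le_mul_of_nonneg_left ?_ (by positivity), mul_le_mul_of_nonneg_left ?_ (by positivity)⟩
  · exact div_sq_le_one_div_of_le_of_le (by linarith) hN hNF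
  · exact (one_div_le (by linarith) (by norm_num)).2 (by linarith)
end
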